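/- arXiv:0705.4110 — 3 statements merged into one kernel-verified Lean document; each statement's English description precedes it below -/
import Mathlib

section
/- Fix k ∈ ℕ with k ≥ 1 and 0 < m < k. The function g(λ) = (∑_{i=0}^k i·λ^i) / (∑_{i=0}^k λ^i), defined for λ > 0, is strictly increasing in λ, satisfies g(λ) → 0 as λ → 0⁺ and g(λ) → k as λ → ∞; hence there is a unique λ > 0 with g(λ) = m. -/
/-!
Cross-multiplied, `g a < g b` for `0 < a < b` is a weighted Chebyshev inequality: with weights
`a ^ i`, the sequences `i` and `(b / a) ^ i` are both increasing. The function is continuous on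
`[0, ∞)` with `g 0 = 0`, and reversing the order of summation gives `g (1 / x) = k - g x`, which
turns the limit at `0⁺` into the limit `k` at `∞`. The intermediate value theorem on `[0, b]` and
strict monotonicity then give the unique solution of `g x = m`.
-/

open Finset Filter Topology

section Chebyshev

variable {ι K : Type*} [CommRing K]

theorem two_mul_sum_mul_sum_sub_sum_mul_sum (s : Finset ι) (w f g : ι → K) :
    2 * ((∑ i ∈ s, w i) * ∑ i ∈ s, w i * (f i * g i)
      - (∑ i ∈ s, w i * f i) * ∑ i ∈ s, w i * g i) =
      ∑ i ∈ s, ∑ j ∈ s, w i * w j * ((f j - f i) * (g j - g i)) := by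
  symm
  calc ∑ i ∈ s, ∑ j ∈ s, w i * w j * ((f j - f i) * (g j - g i))
      = ∑ i ∈ s, ∑ j ∈ s, (w i * (w j * (f j * g j)) + w i * (f i * g i) * w j
          - w i * f i * (w j * g j) - w i * g i * (w j * f j)) :=
        sum_congr rfl fun _ _ => sum_congr rfl fun _ _ => by ring
    _ = _ := by simp only [sum_add_distrib, sum_sub_distrib, ← sum_mul_sum]; ring

variable [LinearOrder K] [IsStrictOrderedRing K]

theorem MonovaryOn.sum_mul_sum_lt_sum_mul_sum {s : Finset ι} {w f g : ι → K}
    (hfg : MonovaryOn f g s) (hw : ∀ i ∈ s, 0 < w i) {i j : ι} (hi : i ∈ s) (hj : j ∈ s)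
    (hf : f i < f j) (hg : g i < g j) :
    (∑ i ∈ s, w i * f i) * ∑ i ∈ s, w i * g i < (∑ i ∈ s, w i) * ∑ i ∈ s, w i * (f i * g i) := by
  have hterm : ∀ i ∈ s, ∀ j ∈ s, 0 ≤ w i * w j * ((f j - f i) * (g j - g i)) := fun i hi j hj =>
    mul_nonneg (mul_pos (hw i hi) (hw j hj)).le (hfg.sub_mul_sub_nonneg hi hj)
  have hpos : 0 < ∑ i ∈ s, ∑ j ∈ s, w i * w j * ((f j - f i) * (g j - g i)) :=
    sum_pos' (fun i hi => sum_nonneg (hterm i hi)) ⟨i, hi, sum_pos' (hterm i hi)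
      ⟨j, hj, mul_pos (mul_pos (hw i hi) (hw j hj)) (mul_pos (sub_pos.2 hf) (sub_pos.2 hg))⟩⟩
  rw [← two_mul_sum_mul_sum_sub_sum_mul_sum] at hpos
  linarith

end Chebyshev

noncomputable def truncGeomMean (k : ℕ) (x : ℝ) : ℝ :=
  (∑ i ∈ range (k + 1), (i : ℝ) * x ^ i) / ∑ i ∈ range (k + 1), x ^ i

namespace truncGeomMean

variable {k : ℕ}

theorem strictMonoOn (hk : 1 ≤ k) : StrictMonoOn (truncGeomMean k) (Set.Ioi 0) := by
  intro a (ha : 0 < a) b (hb : 0 < b) hab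
  have hba : 1 < b / a := (one_lt_div ha).2 hab
  have hmono : MonovaryOn (fun i : ℕ => (i : ℝ)) (fun i => (b / a) ^ i) ↑(range (k + 1)) :=
    (Nat.mono_cast.monovary (pow_right_mono₀ hba.le)).monovaryOn _
  have hcheb := hmono.sum_mul_sum_lt_sum_mul_sum (w := fun i => a ^ i) (i := 0) (j := 1)
    (fun i _ => pow_pos ha i) (by simp) (mem_range.2 (by omega)) (by norm_num) (by simpa using hba)
  have hrescale (i : ℕ) : a ^ i * (b / a) ^ i = b ^ i := by
    rw [← mul_pow, mul_div_cancel₀ _ ha.ne']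
  simp only [hrescale, mul_left_comm (a ^ _) (_ : ℝ), mul_comm (a ^ _) (_ : ℝ)] at hcheb
  unfold truncGeomMean
  rw [div_lt_div_iff₀ (geom_sum_pos ha.le k.succ_ne_zero) (geom_sum_pos hb.le k.succ_ne_zero)]
  linarith

theorem continuousOn : ContinuousOn (truncGeomMean k) (Set.Ici 0) :=
  ContinuousOn.div (by fun_prop) (by fun_prop) fun _ hx => (geom_sum_pos hx k.succ_ne_zero).ne'

@[simp]
theorem zero : truncGeomMean k 0 = 0 := by
  rw [truncGeomMean, sum_eq_zero fun i _ => by rcases i with _ | i <;> simp, zero_div]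

theorem inv {x : ℝ} (hx : 0 < x) : truncGeomMean k x⁻¹ = k - truncGeomMean k x := by
  have hreflect (c : ℕ → ℝ) :
      (∑ i ∈ range (k + 1), c i * x⁻¹ ^ i) * x ^ k = ∑ i ∈ range (k + 1), c (k - i) * x ^ i := by
    rw [sum_mul, ← sum_range_reflect]
    refine sum_congr rfl fun i hi => ?_
    have hik : i ≤ k := Nat.lt_succ_iff.1 (mem_range.1 hi)
    rw [add_tsub_cancel_right, mul_assoc, inv_pow, pow_sub₀ x hx.ne' hik]
    field_simp
  have hden : 0 < ∑ i ∈ range (k + 1), x ^ i := geom_sum_pos hx.le k.succ_ne_zero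
  have hden_inv : (∑ i ∈ range (k + 1), x⁻¹ ^ i) * x ^ k = ∑ i ∈ range (k + 1), x ^ i := by
    simpa using hreflect fun _ => 1
  have hnum : ∑ i ∈ range (k + 1), ((k - i : ℕ) : ℝ) * x ^ i
      = k * ∑ i ∈ range (k + 1), x ^ i - ∑ i ∈ range (k + 1), (i : ℝ) * x ^ i := by
    rw [mul_sum, ← sum_sub_distrib]
    refine sum_congr rfl fun i hi => ?_
    rw [Nat.cast_sub (Nat.lt_succ_iff.1 (mem_range.1 hi))]
    ring
  unfold truncGeomMean
  rw [← mul_div_mul_right _ _ (pow_ne_zero k hx.ne'), hreflect, hden_inv, hnum, sub_div,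
    mul_div_cancel_right₀ _ hden.ne']

theorem tendsto_nhdsGT_zero : Tendsto (truncGeomMean k) (𝓝[>] 0) (𝓝 0) := by
  have := (continuousOn (k := k) 0 Set.self_mem_Ici).tendsto
  rw [zero] at this
  exact this.mono_left (nhdsWithin_mono _ Set.Ioi_subset_Ici_self)

theorem tendsto_atTop : Tendsto (truncGeomMean k) atTop (𝓝 k) := by
  have hlim : Tendsto (fun x => (k : ℝ) - truncGeomMean k x⁻¹) atTop (𝓝 (k - 0)) :=
    tendsto_const_nhds.sub (tendsto_nhdsGT_zero.comp tendsto_inv_atTop_nhdsGT_zero)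
  rw [sub_zero] at hlim
  refine hlim.congr' ?_
  filter_upwards [eventually_gt_atTop 0] with x hx
  rw [inv hx, sub_sub_cancel]

theorem existsUnique_eq (hk : 1 ≤ k) {m : ℝ} (hm : 0 < m) (hmk : m < k) :
    ∃! x, x ∈ Set.Ioi (0 : ℝ) ∧ truncGeomMean k x = m := by
  obtain ⟨b, hmb, hb⟩ :=
    ((tendsto_atTop.eventually_const_lt hmk).and (eventually_ge_atTop 0)).exists
  obtain ⟨x, hx, rfl⟩ := intermediate_value_Ioc hb (continuousOn.mono Set.Icc_subset_Ici_self)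
    (show m ∈ Set.Ioc (truncGeomMean k 0) (truncGeomMean k b) from ⟨by simpa using hm, hmb.le⟩)
  exact ⟨x, ⟨hx.1, rfl⟩, fun y hy => strictMonoOn hk |>.injOn hy.1 hx.1 hy.2⟩

end truncGeomMean

/-- the mean of the truncated geometric distribution on {0,…,k},
g(λ) = (∑ i·λ^i)/(∑ λ^i), is strictly increasing on (0,∞), tends to 0 at 0⁺ and
to k at ∞; hence there is a unique λ > 0 with g(λ) = m for 0 < m < k. -/
theorem stmt_2 (k : ℕ) (hk : 1 ≤ k) (m : ℝ) (hm : 0 < m) (hmk : m < k) :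
    StrictMonoOn
      (fun lam : ℝ => (∑ i ∈ range (k + 1), (i : ℝ) * lam ^ i) /
        (∑ i ∈ range (k + 1), lam ^ i)) (Set.Ioi 0) ∧
    Tendsto
      (fun lam : ℝ => (∑ i ∈ range (k + 1), (i : ℝ) * lam ^ i) /
        (∑ i ∈ range (k + 1), lam ^ i))
      (nhdsWithin 0 (Set.Ioi 0)) (nhds 0) ∧
    Tendsto
      (fun lam : ℝ => (∑ i ∈ range (k + 1), (i : ℝ) * lam ^ i) /
        (∑ i ∈ range (k + 1), lam ^ i))
      atTop (nhds k) ∧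
    (∃! lam : ℝ, lam ∈ Set.Ioi (0 : ℝ) ∧
      (∑ i ∈ range (k + 1), (i : ℝ) * lam ^ i) /
        (∑ i ∈ range (k + 1), lam ^ i) = m) :=
  ⟨truncGeomMean.strictMonoOn hk, truncGeomMean.tendsto_nhdsGT_zero, truncGeomMean.tendsto_atTop,
    truncGeomMean.existsUnique_eq hk hm hmk⟩
end

section
/- Suppose M is a distribution of money on {0,…,K} arising from an explanation π with parameter λ > 0, i.e. M_i = B_i λ^i where B_i = ∑_{k≥i} π_k / ∑_{j=0}^k λ^j. If π has support of size s and the largest element of its support is K, then at least K − s of the ratios M_i / M_{i−1} for 1 ≤ i ≤ K equal λ; specifically, whenever π_{i−1} = 0 (and M_{i-1} > 0), we have M_i / M_{i−1} = λ. -/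
/-!
Passing from `M_i` to `M_{i+1}` multiplies every threshold term `k ≥ i + 1` by `λ` and drops
the term `k = i`, which vanishes when `π_i = 0`; so `M_{i+1} = λ M_i`. Since `π_K > 0`, `M` is
positive on `{0,…,K}`, and among `0,…,K-1` at least `K - s` thresholds have `π_k = 0`.
-/

open Finset

noncomputable def moneyDist (π : ℕ → ℝ) (lam : ℝ) (K i : ℕ) : ℝ :=
  ∑ k ∈ Icc i K, π k * lam ^ i / ∑ j ∈ range (k + 1), lam ^ j

theorem moneyDist_succ_of_eq_zero {π : ℕ → ℝ} (lam : ℝ) (K : ℕ) {i : ℕ} (hi : π i = 0) :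
    moneyDist π lam K (i + 1) = lam * moneyDist π lam K i := by
  unfold moneyDist
  rw [mul_sum]
  calc ∑ k ∈ Icc (i + 1) K, π k * lam ^ (i + 1) / ∑ j ∈ range (k + 1), lam ^ j
      = ∑ k ∈ Icc i K, π k * lam ^ (i + 1) / ∑ j ∈ range (k + 1), lam ^ j := by
        refine sum_subset (Icc_subset_Icc_left i.le_succ) fun k hk hk' => ?_
        obtain rfl : k = i := by simp only [mem_Icc] at hk hk'; omega
        simp [hi]
    _ = _ := sum_congr rfl fun k _ => by ring

theorem moneyDist_pos {π : ℕ → ℝ} {lam : ℝ} {K i : ℕ} (hlam : 0 < lam)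
    (hπ : ∀ k, 0 ≤ π k) (hπK : 0 < π K) (hi : i ≤ K) : 0 < moneyDist π lam K i := by
  have hterm (k : ℕ) : 0 ≤ π k * lam ^ i / ∑ j ∈ range (k + 1), lam ^ j := by
    have := geom_sum_pos hlam.le k.succ_ne_zero
    have := hπ k
    positivity
  refine sum_pos' (fun k _ => hterm k) ⟨K, mem_Icc.mpr ⟨hi, le_rfl⟩, ?_⟩
  have := geom_sum_pos hlam.le K.succ_ne_zero
  positivity

theorem sub_card_filter_le_card_filter_not (p : ℕ → Prop) [DecidablePred p] (K : ℕ) :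
    K - #{k ∈ range (K + 1) | p k} ≤ #{k ∈ range K | ¬ p k} := by
  have hsplit := card_filter_add_card_filter_not (s := range K) (fun k => p k)
  have hmono : #{k ∈ range K | p k} ≤ #{k ∈ range (K + 1) | p k} :=
    card_le_card (filter_subset_filter _ (range_subset_range.mpr K.le_succ))
  rw [card_range] at hsplit
  omega

theorem stmt_10_general (K : ℕ) (π : ℕ → ℝ) (lam : ℝ) (hlam : 0 < lam)
    (hπ : ∀ k, 0 ≤ π k) (hπK : 0 < π K)
    (M : ℕ → ℝ)
    (hM : ∀ i ≤ K, M i = ∑ k ∈ Finset.Icc i K,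
      π k * lam ^ i / ∑ j ∈ range (k + 1), lam ^ j) :
    (∀ i, 1 ≤ i → i ≤ K → π (i - 1) = 0 → 0 < M (i - 1) →
      M i / M (i - 1) = lam) ∧
    K - ((range (K + 1)).filter (fun k => π k ≠ 0)).card ≤
      ((Finset.Icc 1 K).filter (fun i => M i / M (i - 1) = lam)).card := by
  have hM' : ∀ i ≤ K, M i = moneyDist π lam K i := hM
  have ratio (k : ℕ) (hk : k < K) (hπk : π k = 0) (hMk : M k ≠ 0) : M (k + 1) / M k = lam := by
    rw [hM' (k + 1) hk, moneyDist_succ_of_eq_zero lam K hπk, ← hM' k hk.le]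
    field_simp
  refine ⟨fun i hi1 hiK hπi hMi => ?_, ?_⟩
  · obtain ⟨k, rfl⟩ : ∃ k, i = k + 1 := ⟨i - 1, by omega⟩
    exact ratio k (by omega) hπi hMi.ne'
  calc K - #{k ∈ range (K + 1) | π k ≠ 0}
      ≤ #{k ∈ range K | ¬π k ≠ 0} := sub_card_filter_le_card_filter_not _ K
    _ = #({k ∈ range K | ¬π k ≠ 0}.map (addRightEmbedding 1)) := (card_map _).symm
    _ ≤ #{i ∈ Icc 1 K | M i / M (i - 1) = lam} := card_le_card fun i hi => by
      obtain ⟨k, hk, rfl⟩ := mem_map.mp hi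
      rw [mem_filter, mem_range, not_not] at hk
      have hMk : M k ≠ 0 := (hM' k hk.1.le).symm ▸ (moneyDist_pos hlam hπ hπK hk.1.le).ne'
      exact mem_filter.mpr ⟨mem_Icc.mpr ⟨by simp, hk.1⟩, ratio k hk.1 hk.2 hMk⟩

/-- if M is the money distribution induced by an explanation π
(supported in {0,…,K}, with π_K > 0) with parameter λ, then M_i / M_{i−1} = λ
whenever π_{i−1} = 0 (and M_{i−1} > 0); hence at least K − s of the ratios
M_i/M_{i−1}, 1 ≤ i ≤ K, equal λ, where s is the size of the support of π. -/
theorem stmt_10 (K : ℕ) (π : ℕ → ℝ) (lam : ℝ) (hlam : 0 < lam)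
    (hπ : ∀ k, 0 ≤ π k) (hπsupp : ∀ k, K < k → π k = 0)
    (hπsum : ∑ k ∈ range (K + 1), π k = 1) (hπK : 0 < π K)
    (M : ℕ → ℝ)
    (hM : ∀ i ≤ K, M i = ∑ k ∈ Finset.Icc i K,
      π k * lam ^ i / ∑ j ∈ range (k + 1), lam ^ j) :
    (∀ i, 1 ≤ i → i ≤ K → π (i - 1) = 0 → 0 < M (i - 1) →
      M i / M (i - 1) = lam) ∧
    K - ((range (K + 1)).filter (fun k => π k ≠ 0)).card ≤
      ((Finset.Icc 1 K).filter (fun i => M i / M (i - 1) = lam)).card :=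
  stmt_10_general K π lam hlam hπ hπK M hM
end

section
/- Under the hypotheses of the previous statement, any other explanation π' of M (with a necessarily different parameter λ' ≠ λ) must have support of size at least K − s, where s is the size of the support of π and K is its maximum element. -/
/-!
If `π k = π' k = 0` for some `k < K`, then `M (k + 1) / M k` equals both `λ` and `λ'`, and
`M k > 0` because `π K > 0`. Hence every `k < K` lies in the support of `π` or of `π'`,
and the two supports together have at least `K` elements.
-/

open Finset

noncomputable def moneyDistribution (K : ℕ) (π : ℕ → ℝ) (lam : ℝ) (i : ℕ) : ℝ :=
  ∑ k ∈ Icc i K, π k * lam ^ i / ∑ j ∈ range (k + 1), lam ^ j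

lemma moneyDistribution_succ_of_eq_zero {K k : ℕ} {π : ℕ → ℝ} (lam : ℝ) (hk : k < K)
    (hπk : π k = 0) :
    moneyDistribution K π lam (k + 1) = lam * moneyDistribution K π lam k := by
  rw [moneyDistribution, moneyDistribution, Icc_eq_cons_Ioc hk.le, sum_cons, hπk,
    ← Icc_add_one_left_eq_Ioc, zero_mul, zero_div, zero_add, mul_sum]
  refine sum_congr rfl fun j _ => ?_
  ring

lemma moneyDistribution_pos {K k : ℕ} {π : ℕ → ℝ} {lam : ℝ} (hlam : 0 < lam)
    (hπ : ∀ k, 0 ≤ π k) (hπK : 0 < π K) (hk : k ≤ K) :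
    0 < moneyDistribution K π lam k := by
  have hgeom : ∀ n, 0 < ∑ j ∈ range (n + 1), lam ^ j :=
    fun n => sum_pos (fun j _ => pow_pos hlam j) nonempty_range_add_one
  refine sum_pos' (fun j _ => div_nonneg (mul_nonneg (hπ j) (pow_nonneg hlam.le k))
    (hgeom j).le) ⟨K, mem_Icc.2 ⟨hk, le_rfl⟩, ?_⟩
  exact div_pos (mul_pos hπK (pow_pos hlam k)) (hgeom K)

lemma sub_card_filter_le_card_filter_of_forall_or (K : ℕ) {p q : ℕ → Prop}
    [DecidablePred p] [DecidablePred q] (h : ∀ k < K, p k ∨ q k) :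
    K - ((range (K + 1)).filter p).card ≤ ((range (K + 1)).filter q).card := by
  have hcover : range K ⊆ (range (K + 1)).filter p ∪ (range (K + 1)).filter q := by
    intro k hk
    have hk' : k < K := mem_range.1 hk
    simp only [mem_union, mem_filter, mem_range]
    rcases h k hk' with hp | hq
    · exact Or.inl ⟨by omega, hp⟩
    · exact Or.inr ⟨by omega, hq⟩
  have := (card_le_card hcover).trans (card_union_le _ _)
  rw [card_range] at this
  omega

theorem stmt_11_general (K : ℕ) (π π' : ℕ → ℝ) (lam lam' : ℝ)
    (hlam : 0 < lam) (hne : lam' ≠ lam)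
    (hπ : ∀ k, 0 ≤ π k) (hπK : 0 < π K)
    (M : ℕ → ℝ)
    (hM : ∀ i ≤ K, M i = ∑ k ∈ Finset.Icc i K,
      π k * lam ^ i / ∑ j ∈ range (k + 1), lam ^ j)
    (hM' : ∀ i ≤ K, M i = ∑ k ∈ Finset.Icc i K,
      π' k * lam' ^ i / ∑ j ∈ range (k + 1), lam' ^ j) :
    K - ((range (K + 1)).filter (fun k => π k ≠ 0)).card ≤
      ((range (K + 1)).filter (fun k => π' k ≠ 0)).card := by
  replace hM : ∀ i ≤ K, M i = moneyDistribution K π lam i := hM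
  replace hM' : ∀ i ≤ K, M i = moneyDistribution K π' lam' i := hM'
  refine sub_card_filter_le_card_filter_of_forall_or K fun k hk => ?_
  by_contra! hzero
  have hMk : M k ≠ 0 := by
    rw [hM k hk.le]
    exact (moneyDistribution_pos hlam hπ hπK hk.le).ne'
  refine hne (mul_right_cancel₀ hMk ?_)
  calc lam' * M k = M (k + 1) := by
        rw [hM' _ hk, hM' _ hk.le, moneyDistribution_succ_of_eq_zero lam' hk hzero.2]
    _ = lam * M k := by
        rw [hM _ hk, hM _ hk.le, moneyDistribution_succ_of_eq_zero lam hk hzero.1]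

/-- if M is the money distribution induced by an explanation π
(supported in {0,…,K}, π_K > 0, support size s) with parameter λ, then any
other explanation π' of M, with parameter λ' ≠ λ, has support of size at least
K − s. -/
theorem stmt_11 (K : ℕ) (π π' : ℕ → ℝ) (lam lam' : ℝ)
    (hlam : 0 < lam) (hlam' : 0 < lam') (hne : lam' ≠ lam)
    (hπ : ∀ k, 0 ≤ π k) (hπsupp : ∀ k, K < k → π k = 0)
    (hπsum : ∑ k ∈ range (K + 1), π k = 1) (hπK : 0 < π K)
    (hπ' : ∀ k, 0 ≤ π' k) (hπ'supp : ∀ k, K < k → π' k = 0)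
    (hπ'sum : ∑ k ∈ range (K + 1), π' k = 1)
    (M : ℕ → ℝ)
    (hM : ∀ i ≤ K, M i = ∑ k ∈ Finset.Icc i K,
      π k * lam ^ i / ∑ j ∈ range (k + 1), lam ^ j)
    (hM' : ∀ i ≤ K, M i = ∑ k ∈ Finset.Icc i K,
      π' k * lam' ^ i / ∑ j ∈ range (k + 1), lam' ^ j) :
    K - ((range (K + 1)).filter (fun k => π k ≠ 0)).card ≤
      ((range (K + 1)).filter (fun k => π' k ≠ 0)).card :=
  stmt_11_general K π π' lam lam' hlam hne hπ hπK M hM hM'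
end
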